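/- arXiv:2011.14865 — 2 statements merged into one kernel-verified Lean document; each statement's English description precedes it below -/
import Mathlib

section
/- Let K = 2 with distinct indices k, l ∈ {1,2}. Assume min(a_{k0}, a_{k1}) = 0 with max(a_{k0}, a_{k1}) = a_{k•} = 2, and a_{l0} = a_{l1} = 2 (so a_{l•} = 4 and n = 6). Then lim_{λ→∞} D(λ) = 12 log 2 and D(λ) > 12 log 2 for every λ ≥ 0; i.e. the infimum of the LOOCV deviance over [0, ∞) equals its limit as λ → ∞ and is not attained at any finite λ (λ_D = ∞). -/
/-!
With `N = a₀ + a₁ - 1 + 4λ`, the summand of category `k` is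
`a₀ log ((a₀ - 1 + 2λ)/N) + a₁ log ((a₁ - 1 + 2λ)/N)`, symmetric in `a₀, a₁`. Hence both
categories contribute explicitly and
`D(λ) = -4 log ((1 + 2λ)/(1 + 4λ)) - 8 log ((1 + 2λ)/(3 + 4λ))`. Both ratios tend to `1/2`,
giving the limit `12 log 2`, while `D(λ) - 12 log 2 = -4 log (8 u v²)` for the two ratios
`u, v`, and `8 (1 + 2λ)³ < (1 + 4λ)(3 + 4λ)²` because the difference is `1 + 12λ + 16λ²`.
-/

/-- Leave-one-out cross-validated deviance for a saturated model with `K` categories,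
counts `a0 k` (nonevents) and `a1 k` (events), and ridge penalty parameter `l`.
Summands whose count coefficient is zero vanish (in Lean, `0 * log _ = 0`). -/
noncomputable def loocvDev (K : ℕ) (a0 a1 : Fin K → ℕ) (l : ℝ) : ℝ :=
  -2 * ∑ k : Fin K,
    ((a0 k : ℝ) *
        Real.log (1 - ((a1 k : ℝ) + 2 * l) / ((a0 k : ℝ) + (a1 k : ℝ) - 1 + 4 * l)) +
     (a1 k : ℝ) *
        Real.log (((a1 k : ℝ) - 1 + 2 * l) / ((a0 k : ℝ) + (a1 k : ℝ) - 1 + 4 * l)))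

open Filter Topology Real

theorem isGLB_image_of_tendsto {α : Type*} {f : α → ℝ} {l : Filter α} [l.NeBot] {s : Set α}
    {L : ℝ} (hs : s ∈ l) (hf : Tendsto f l (𝓝 L)) (hle : ∀ x ∈ s, L ≤ f x) :
    IsGLB (f '' s) L := by
  refine ⟨by rintro _ ⟨x, hx, rfl⟩; exact hle x hx, fun b hb => ?_⟩
  exact ge_of_tendsto hf (mem_of_superset hs fun x hx => hb ⟨x, hx, rfl⟩)

theorem tendsto_add_mul_div_add_mul_atTop (a b c d : ℝ) (hd : d ≠ 0) :
    Tendsto (fun x : ℝ => (a + b * x) / (c + d * x)) atTop (𝓝 (b / d)) := by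
  have hinv := tendsto_inv_atTop_zero (𝕜 := ℝ)
  have h : Tendsto (fun x : ℝ => (a * x⁻¹ + b) / (c * x⁻¹ + d)) atTop
      (𝓝 ((a * 0 + b) / (c * 0 + d))) :=
    ((hinv.const_mul a).add_const b).div ((hinv.const_mul c).add_const d) (by simpa using hd)
  simp only [mul_zero, zero_add] at h
  refine h.congr' ?_
  filter_upwards [eventually_gt_atTop 0] with x hx
  rw [← mul_div_mul_right _ _ hx.ne']
  congr 1 <;> field_simp

noncomputable def looSummand (a0 a1 : ℕ) (l : ℝ) : ℝ :=
  (a0 : ℝ) * Real.log (1 - ((a1 : ℝ) + 2 * l) / ((a0 : ℝ) + (a1 : ℝ) - 1 + 4 * l)) +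
    (a1 : ℝ) * Real.log (((a1 : ℝ) - 1 + 2 * l) / ((a0 : ℝ) + (a1 : ℝ) - 1 + 4 * l))

theorem loocvDev_eq_sum (K : ℕ) (a0 a1 : Fin K → ℕ) (l : ℝ) :
    loocvDev K a0 a1 l = -2 * ∑ k, looSummand (a0 k) (a1 k) l := rfl

theorem looSummand_eq {a0 a1 : ℕ} {l : ℝ} (hN : (a0 : ℝ) + a1 - 1 + 4 * l ≠ 0) :
    looSummand a0 a1 l =
      a0 * log ((a0 - 1 + 2 * l) / (a0 + a1 - 1 + 4 * l)) +
        a1 * log ((a1 - 1 + 2 * l) / (a0 + a1 - 1 + 4 * l)) := by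
  rw [looSummand, one_sub_div hN]
  ring_nf

theorem looSummand_comm {a0 a1 : ℕ} {l : ℝ} (hN : (a0 : ℝ) + a1 - 1 + 4 * l ≠ 0) :
    looSummand a0 a1 l = looSummand a1 a0 l := by
  rw [looSummand_eq hN, looSummand_eq (by rwa [add_comm (a1 : ℝ)]), add_comm (a1 : ℝ),
    add_comm]

theorem looSummand_of_separated {a0 a1 : ℕ} {l : ℝ} (hl : 0 ≤ l) (hmin : min a0 a1 = 0)
    (hsum : a0 + a1 = 2) :
    looSummand a0 a1 l = 2 * log ((1 + 2 * l) / (1 + 4 * l)) := by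
  have h02 : looSummand 0 2 l = 2 * log ((1 + 2 * l) / (1 + 4 * l)) := by
    rw [looSummand_eq (by norm_num; linarith)]
    norm_num
  rcases (show (a0 = 0 ∧ a1 = 2) ∨ (a0 = 2 ∧ a1 = 0) by omega) with ⟨rfl, rfl⟩ | ⟨rfl, rfl⟩
  · exact h02
  · rw [looSummand_comm (by norm_num; linarith), h02]

theorem looSummand_two_two {l : ℝ} (hl : 0 ≤ l) :
    looSummand 2 2 l = 4 * log ((1 + 2 * l) / (3 + 4 * l)) := by
  rw [looSummand_eq (by norm_num; linarith)]
  norm_num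
  ring_nf

noncomputable def separatedDev (l : ℝ) : ℝ :=
  -4 * log ((1 + 2 * l) / (1 + 4 * l)) - 8 * log ((1 + 2 * l) / (3 + 4 * l))

theorem loocvDev_eq_separatedDev {a0 a1 : Fin 2 → ℕ} {k l : Fin 2} (hkl : k ≠ l)
    (hmin : min (a0 k) (a1 k) = 0) (hsum : a0 k + a1 k = 2) (hl : a0 l = 2 ∧ a1 l = 2)
    {lam : ℝ} (hlam : 0 ≤ lam) :
    loocvDev 2 a0 a1 lam = separatedDev lam := by
  have hpair : ∀ F : Fin 2 → ℝ, ∑ i, F i = F k + F l := by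
    fin_cases k <;> fin_cases l <;> simp_all [Fin.sum_univ_two, add_comm]
  rw [loocvDev_eq_sum, hpair, looSummand_of_separated hlam hmin hsum, hl.1, hl.2,
    looSummand_two_two hlam, separatedDev]
  ring

theorem tendsto_separatedDev : Tendsto separatedDev atTop (𝓝 (12 * log 2)) := by
  have hlog : ∀ c : ℝ, Tendsto (fun l : ℝ => log ((1 + 2 * l) / (c + 4 * l))) atTop
      (𝓝 (-log 2)) := fun c => by
    have := (continuousAt_log (by norm_num : (2 / 4 : ℝ) ≠ 0)).tendsto.comp
      (tendsto_add_mul_div_add_mul_atTop 1 2 c 4 (by norm_num))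
    rwa [show (2 / 4 : ℝ) = 2⁻¹ by norm_num, log_inv] at this
  have := ((hlog 1).const_mul (-4)).sub ((hlog 3).const_mul 8)
  rwa [show 12 * log 2 = -4 * -log 2 - 8 * -log 2 by ring]

theorem twelve_mul_log_two_lt_separatedDev {l : ℝ} (hl : 0 ≤ l) :
    12 * log 2 < separatedDev l := by
  have hu : 0 < (1 + 2 * l) / (1 + 4 * l) := by positivity
  have hv : 0 < (1 + 2 * l) / (3 + 4 * l) := by positivity
  have hcubic : 8 * ((1 + 2 * l) / (1 + 4 * l)) * ((1 + 2 * l) / (3 + 4 * l)) ^ 2 < 1 := by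
    rw [show 8 * ((1 + 2 * l) / (1 + 4 * l)) * ((1 + 2 * l) / (3 + 4 * l)) ^ 2 =
        8 * (1 + 2 * l) ^ 3 / ((1 + 4 * l) * (3 + 4 * l) ^ 2) by field_simp,
      div_lt_one (by positivity)]
    nlinarith [sq_nonneg l]
  have hgap : separatedDev l - 12 * log 2 =
      -4 * log (8 * ((1 + 2 * l) / (1 + 4 * l)) * ((1 + 2 * l) / (3 + 4 * l)) ^ 2) := by
    rw [log_mul (by positivity) (by positivity), log_mul (by norm_num) hu.ne', log_pow,
      show (8 : ℝ) = 2 ^ 3 by norm_num, log_pow, separatedDev]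
    push_cast
    ring
  have := log_neg (by positivity) hcubic
  linarith

/-- `K = 2`, category `k` separated with `a_{k•} = 2`, and `a_{l0} = a_{l1} = 2`. Then the
LOOCV deviance tends to `12 log 2` as `λ → ∞`, is strictly above `12 log 2` at every
`λ ≥ 0`, and `12 log 2` is its infimum over `[0, ∞)` (so the infimum is not attained). -/
theorem stmt9 (a0 a1 : Fin 2 → ℕ) (k l : Fin 2) (hkl : k ≠ l)
    (hk : min (a0 k) (a1 k) = 0 ∧ max (a0 k) (a1 k) = 2 ∧ a0 k + a1 k = 2)
    (hl : a0 l = 2 ∧ a1 l = 2) :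
    Filter.Tendsto (loocvDev 2 a0 a1) Filter.atTop (nhds (12 * Real.log 2)) ∧
    (∀ lam : ℝ, 0 ≤ lam → 12 * Real.log 2 < loocvDev 2 a0 a1 lam) ∧
    IsGLB (loocvDev 2 a0 a1 '' Set.Ici 0) (12 * Real.log 2) := by
  have hD : ∀ lam : ℝ, 0 ≤ lam → loocvDev 2 a0 a1 lam = separatedDev lam :=
    fun lam => loocvDev_eq_separatedDev hkl hk.1 hk.2.2 hl
  have htend : Tendsto (loocvDev 2 a0 a1) atTop (𝓝 (12 * log 2)) :=
    tendsto_separatedDev.congr' <| (eventually_ge_atTop 0).mono fun lam hlam => (hD lam hlam).symm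
  have hgt : ∀ lam : ℝ, 0 ≤ lam → 12 * log 2 < loocvDev 2 a0 a1 lam := fun lam hlam =>
    hD lam hlam ▸ twelve_mul_log_two_lt_separatedDev hlam
  exact ⟨htend, hgt,
    isGLB_image_of_tendsto (Ici_mem_atTop 0) htend fun lam hlam => (hgt lam hlam).le⟩
end

section
/- Let K = 2 with distinct indices k, l ∈ {1,2}. Assume min(a_{k0}, a_{k1}) = 0 with max(a_{k0}, a_{k1}) = a_{k•} = 2, and {a_{l0}, a_{l1}} = {2, 3} (so a_{l•} = 5 and n = 7). Then D(0) = 14 log 2, lim_{λ→∞} D(λ) = 14 log 2, and D(λ) ≥ 14 log 2 for every λ ≥ 0; i.e. the LOOCV deviance has the same value 14 log 2 at λ = 0 and in the limit λ → ∞, and this common value is its infimum over [0, ∞). -/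
/-!
Writing `m = a_{k•} - 1 + 4λ`, one has `1 - π̂_{k0}(λ) = (a_{k0} - 1 + 2λ)/m`, so each summand of the
deviance is symmetric in `(a_{k0}, a_{k1})`. For the two categories in question this gives
`D(λ) = 14 log 2 - 4 log ρ(λ)` with `ρ(λ) = (1 + 2λ)² / ((1 + λ)(1 + 4λ))`. Now `ρ(0) = 1`,
`ρ(λ) → 1` as `λ → ∞`, and `ρ(λ) ≤ 1` for `λ ≥ 0` because `(1 + λ)(1 + 4λ) - (1 + 2λ)² = λ`.
-/

open Filter Real Topology

noncomputable def loocvTerm (b0 b1 : ℕ) (l : ℝ) : ℝ :=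
  (b0 : ℝ) * log (1 - ((b1 : ℝ) + 2 * l) / ((b0 : ℝ) + b1 - 1 + 4 * l)) +
    (b1 : ℝ) * log (((b1 : ℝ) - 1 + 2 * l) / ((b0 : ℝ) + b1 - 1 + 4 * l))

theorem loocvDev_eq_sum_loocvTerm (K : ℕ) (a0 a1 : Fin K → ℕ) (l : ℝ) :
    loocvDev K a0 a1 l = -2 * ∑ k, loocvTerm (a0 k) (a1 k) l :=
  rfl

section loocvTerm

variable {b0 b1 : ℕ} {l : ℝ}

theorem loocvTerm_eq (hm : (b0 : ℝ) + b1 - 1 + 4 * l ≠ 0) :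
    loocvTerm b0 b1 l =
      b0 * log (((b0 : ℝ) - 1 + 2 * l) / ((b0 : ℝ) + b1 - 1 + 4 * l)) +
        b1 * log (((b1 : ℝ) - 1 + 2 * l) / ((b0 : ℝ) + b1 - 1 + 4 * l)) := by
  rw [loocvTerm, one_sub_div hm]
  ring_nf

theorem loocvTerm_comm (hm : (b0 : ℝ) + b1 - 1 + 4 * l ≠ 0) :
    loocvTerm b0 b1 l = loocvTerm b1 b0 l := by
  have hm' : (b1 : ℝ) + b0 - 1 + 4 * l ≠ 0 := by rwa [add_comm (b1 : ℝ)]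
  rw [loocvTerm_eq hm, loocvTerm_eq hm', add_comm (b1 : ℝ), add_comm]

theorem loocvTerm_zero_two (hl : 0 ≤ l) :
    loocvTerm 0 2 l = 2 * (log (1 + 2 * l) - log (1 + 4 * l)) := by
  rw [loocvTerm, ← log_div (by positivity) (by positivity)]
  norm_num

theorem loocvTerm_of_separated (hl : 0 ≤ l) (hb : b0 = 0 ∧ b1 = 2 ∨ b0 = 2 ∧ b1 = 0) :
    loocvTerm b0 b1 l = 2 * (log (1 + 2 * l) - log (1 + 4 * l)) := by
  rcases hb with ⟨rfl, rfl⟩ | ⟨rfl, rfl⟩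
  · exact loocvTerm_zero_two hl
  · rw [loocvTerm_comm (by norm_num; positivity), loocvTerm_zero_two hl]

theorem loocvTerm_two_three (hl : 0 ≤ l) :
    loocvTerm 2 3 l = 2 * (log (1 + 2 * l) - log (1 + l)) - 7 * log 2 := by
  have hm : ((2 : ℕ) : ℝ) + (3 : ℕ) - 1 + 4 * l = 2 ^ 2 * (1 + l) := by push_cast; ring
  have hhalf : ((3 : ℕ) - 1 + 2 * l) / (2 ^ 2 * (1 + l)) = (2 : ℝ)⁻¹ := by
    field_simp
    ring
  rw [loocvTerm_eq (by rw [hm]; positivity), hm, Nat.cast_ofNat, hhalf, log_inv,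
    log_div (by positivity) (by positivity), log_mul (by positivity) (by positivity), log_pow]
  norm_num
  ring

theorem loocvTerm_of_two_three (hl : 0 ≤ l) (hb : b0 = 2 ∧ b1 = 3 ∨ b0 = 3 ∧ b1 = 2) :
    loocvTerm b0 b1 l = 2 * (log (1 + 2 * l) - log (1 + l)) - 7 * log 2 := by
  rcases hb with ⟨rfl, rfl⟩ | ⟨rfl, rfl⟩
  · exact loocvTerm_two_three hl
  · rw [loocvTerm_comm (by norm_num; positivity), loocvTerm_two_three hl]

end loocvTerm

theorem Fin.sum_univ_two_of_ne {M : Type*} [AddCommMonoid M] {k l : Fin 2} (hkl : k ≠ l)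
    (f : Fin 2 → M) : ∑ i, f i = f k + f l :=
  Fintype.sum_eq_add k l hkl fun i hi => by omega

noncomputable def devRatio (l : ℝ) : ℝ :=
  (1 + 2 * l) ^ 2 / ((1 + l) * (1 + 4 * l))

theorem devRatio_zero : devRatio 0 = 1 := by
  norm_num [devRatio]

theorem devRatio_pos {l : ℝ} (hl : 0 ≤ l) : 0 < devRatio l := by
  unfold devRatio
  positivity

theorem devRatio_le_one {l : ℝ} (hl : 0 ≤ l) : devRatio l ≤ 1 := by
  rw [devRatio, div_le_one (by positivity)]
  nlinarith

theorem tendsto_devRatio_atTop : Tendsto devRatio atTop (𝓝 1) := by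
  have h : Tendsto (fun t : ℝ => (2 + t) ^ 2 / ((1 + t) * (4 + t))) (𝓝 0) (𝓝 1) := by
    have hc : ContinuousAt (fun t : ℝ => (2 + t) ^ 2 / ((1 + t) * (4 + t))) 0 := by
      fun_prop (disch := norm_num)
    convert hc.tendsto using 2
    norm_num
  refine (h.comp tendsto_inv_atTop_zero).congr' ?_
  filter_upwards [eventually_gt_atTop 0] with l hl
  simp only [Function.comp_apply, devRatio]
  field_simp
  ring

theorem loocvDev_eq_sub_log_devRatio {a0 a1 : Fin 2 → ℕ} {k l : Fin 2}
    (hk : min (a0 k) (a1 k) = 0 ∧ max (a0 k) (a1 k) = 2 ∧ a0 k + a1 k = 2)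
    (hl : (a0 l = 2 ∧ a1 l = 3) ∨ (a0 l = 3 ∧ a1 l = 2)) {x : ℝ} (hx : 0 ≤ x) :
    loocvDev 2 a0 a1 x = 14 * log 2 - 4 * log (devRatio x) := by
  have hkl : k ≠ l := by
    rintro rfl
    omega
  rw [loocvDev_eq_sum_loocvTerm, Fin.sum_univ_two_of_ne hkl,
    loocvTerm_of_separated hx (by omega), loocvTerm_of_two_three hx hl, devRatio,
    log_div (by positivity) (by positivity), log_mul (by positivity) (by positivity), log_pow]
  push_cast
  ring

theorem stmt12_general (a0 a1 : Fin 2 → ℕ) (k l : Fin 2)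
    (hk : min (a0 k) (a1 k) = 0 ∧ max (a0 k) (a1 k) = 2 ∧ a0 k + a1 k = 2)
    (hl : (a0 l = 2 ∧ a1 l = 3) ∨ (a0 l = 3 ∧ a1 l = 2)) :
    loocvDev 2 a0 a1 0 = 14 * Real.log 2 ∧
    Filter.Tendsto (loocvDev 2 a0 a1) Filter.atTop (nhds (14 * Real.log 2)) ∧
    ∀ lam : ℝ, 0 ≤ lam → 14 * Real.log 2 ≤ loocvDev 2 a0 a1 lam := by
  have hD x (hx : 0 ≤ x) := loocvDev_eq_sub_log_devRatio hk hl hx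
  refine ⟨by simp [hD 0 le_rfl, devRatio_zero], ?_, fun lam hlam => ?_⟩
  · have hlim : Tendsto (fun x => 14 * log 2 - 4 * log (devRatio x)) atTop (𝓝 (14 * log 2)) := by
      simpa using ((tendsto_devRatio_atTop.log one_ne_zero).const_mul 4).const_sub (14 * log 2)
    exact hlim.congr' <| (eventually_ge_atTop 0).mono fun x hx => (hD x hx).symm
  · rw [hD lam hlam]
    linarith [log_nonpos (devRatio_pos hlam).le (devRatio_le_one hlam)]

/-- `K = 2`, category `k` separated with `a_{k•} = 2`, and `{a_{l0}, a_{l1}} = {2, 3}`.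
Then `D(0) = 14 log 2`, `D(λ) → 14 log 2` as `λ → ∞`, and `14 log 2 ≤ D(λ)` for all
`λ ≥ 0`: the common value is the infimum of the LOOCV deviance over `[0, ∞)`. -/
theorem stmt12 (a0 a1 : Fin 2 → ℕ) (k l : Fin 2) (hkl : k ≠ l)
    (hk : min (a0 k) (a1 k) = 0 ∧ max (a0 k) (a1 k) = 2 ∧ a0 k + a1 k = 2)
    (hl : (a0 l = 2 ∧ a1 l = 3) ∨ (a0 l = 3 ∧ a1 l = 2)) :
    loocvDev 2 a0 a1 0 = 14 * Real.log 2 ∧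
    Filter.Tendsto (loocvDev 2 a0 a1) Filter.atTop (nhds (14 * Real.log 2)) ∧
    ∀ lam : ℝ, 0 ≤ lam → 14 * Real.log 2 ≤ loocvDev 2 a0 a1 lam :=
  stmt12_general a0 a1 k l hk hl
end
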